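/- Let C be a ℤ_p-chain complex each of whose chain groups is a finitely generated free ℤ[ℤ/pℤ]-module (generator of ℤ/pℤ acting as t). Give Hom(C^s, ℤ) the coboundary dual to the restricted boundary of C^s. Then: (i) every functional in Hom(C^s_n, ℤ) is the restriction to C^s_n of some cochain ψ ∈ C^n; (ii) the map γ_s : C*_s → Hom(C^s, ℤ) given by γ_s(dψ) = ψ|_{C^s} for ψ ∈ C* is well-defined (independent of the choice of ψ) and is a chain homomorphism; (iii) the map ρ_s : Hom(C^s, ℤ) → C*_s given by ρ_s(ψ|_{C^s}) = dψ is well-defined and a chain homomorphism; and (iv) γ_s and ρ_s induce mutually inverse isomorphisms between H^n_s(C) and the n-th cohomology of Hom(C^s, ℤ), for every n. -/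

import Mathlib

/-- A `ℤ_p`-chain complex (in nonnegative degrees) whose degree-`n` chain group is the
finitely generated free ℤ-module with basis `{t^k σ : σ ∈ F n, 0 ≤ k ≤ p−1}`, i.e. the
free ℤ-module on `F n × ZMod p`; the action of `t` cyclically permutes the basis, and
commutes with the boundary. Equivalently, each chain group is a finitely generated free
`ℤ[ℤ/pℤ]`-module with the generator of `ℤ/pℤ` acting as `t`. -/
structure ZpFreeComplex (p : ℕ) where
  F : ℕ → Type
  fin : ∀ n, Fintype (F n)
  bd : ∀ n, ((F (n + 1) × ZMod p → ℤ) →+ (F n × ZMod p → ℤ))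
  bd_bd : ∀ n x, bd n (bd (n + 1) x) = 0
  bd_t : ∀ n (c : F (n + 1) × ZMod p → ℤ),
    bd n (fun z => c (z.1, z.2 - 1)) = fun z => bd n c (z.1, z.2 - 1)

namespace ZpFreeComplex

variable {p : ℕ} (X : ZpFreeComplex p)

/-- degree-`n` chains -/
abbrev Ch (n : ℕ) := X.F n × ZMod p → ℤ

/-- degree-`n` integral cochains -/
abbrev Co (n : ℕ) := (X.F n × ZMod p → ℤ) →+ ℤ

/-- the chain map `t^k` -/
def tCh (n k : ℕ) : X.Ch n →+ X.Ch n where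
  toFun c := fun z => c (z.1, z.2 - (k : ZMod p))
  map_zero' := rfl
  map_add' _ _ := rfl

/-- `s = 1 + t + ⋯ + t^{p−1}` on chains -/
def sCh (n : ℕ) : X.Ch n →+ X.Ch n := ∑ k ∈ Finset.range p, X.tCh n k

/-- `d = 1 − t` on chains -/
def dCh (n : ℕ) : X.Ch n →+ X.Ch n := AddMonoidHom.id _ - X.tCh n 1

/-- the cochain map `t^k`, `φ ↦ φ ∘ t^k` -/
def tCo (n k : ℕ) : X.Co n →+ X.Co n where
  toFun φ := φ.comp (X.tCh n k)
  map_zero' := by ext x; simp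
  map_add' _ _ := by ext x; simp

/-- `s = 1 + t + ⋯ + t^{p−1}` on cochains -/
def sCo (n : ℕ) : X.Co n →+ X.Co n where
  toFun φ := φ.comp (X.sCh n)
  map_zero' := by ext x; simp
  map_add' _ _ := by ext x; simp

/-- `d = 1 − t` on cochains -/
def dCo (n : ℕ) : X.Co n →+ X.Co n where
  toFun φ := φ.comp (X.dCh n)
  map_zero' := by ext x; simp
  map_add' _ _ := by ext x; simp

/-- the coboundary `δφ = φ ∘ ∂` -/
def cb (n : ℕ) : X.Co n →+ X.Co (n + 1) where
  toFun φ := φ.comp (X.bd n)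
  map_zero' := by ext x; simp
  map_add' _ _ := by ext x; simp

/-- the boundary out of degree `n` (the zero map in degree 0). -/
def bdFrom : ∀ n : ℕ, (X.Ch n →+ X.Ch (n - 1))
  | 0 => 0
  | (j + 1) => X.bd j

lemma tCh_one (n : ℕ) (c : X.Ch n) : X.tCh n 1 c = fun z => c (z.1, z.2 - 1) := by
  funext z
  simp [tCh]

lemma tCh_succ (n k : ℕ) (c : X.Ch n) :
    X.tCh n (k + 1) c = X.tCh n 1 (X.tCh n k c) := by
  funext z
  show c (z.1, z.2 - ((k + 1 : ℕ) : ZMod p)) = c (z.1, z.2 - ((1 : ℕ) : ZMod p) - ((k : ℕ) : ZMod p))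
  have h2 : z.2 - ((k + 1 : ℕ) : ZMod p) = z.2 - ((1 : ℕ) : ZMod p) - ((k : ℕ) : ZMod p) := by
    push_cast
    ring
  rw [h2]

lemma tCh_zero (n : ℕ) (c : X.Ch n) : X.tCh n 0 c = c := by
  funext z
  simp [tCh]

lemma bd_tCh (n k : ℕ) (c : X.Ch (n + 1)) :
    X.bd n (X.tCh (n + 1) k c) = X.tCh n k (X.bd n c) := by
  induction k with
  | zero => rw [tCh_zero, tCh_zero]
  | succ k ih =>
      rw [X.tCh_succ (n + 1) k c, X.tCh_succ n k (X.bd n c)]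
      rw [X.tCh_one (n + 1) (X.tCh (n + 1) k c)]
      rw [X.bd_t n (X.tCh (n + 1) k c)]
      rw [ih]
      rw [← X.tCh_one n (X.tCh n k (X.bd n c))]

lemma bd_sCh (n : ℕ) (c : X.Ch (n + 1)) :
    X.bd n (X.sCh (n + 1) c) = X.sCh n (X.bd n c) := by
  simp only [sCh, AddMonoidHom.finset_sum_apply, map_sum, bd_tCh]

lemma bd_dCh (n : ℕ) (c : X.Ch (n + 1)) :
    X.bd n (X.dCh (n + 1) c) = X.dCh n (X.bd n c) := by
  simp only [dCh, AddMonoidHom.sub_apply, AddMonoidHom.id_apply, map_sub, bd_tCh]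

end ZpFreeComplex

namespace ZpFreeComplex

variable {p : ℕ} (X : ZpFreeComplex p)

/-- cocycles of the `d`-cochain complex `C*_d = ker d ⊆ C*` -/
def dcocycles (n : ℕ) : AddSubgroup (X.Co n) := (X.dCo n).ker ⊓ (X.cb n).ker

/-- coboundaries of the `d`-cochain complex -/
def dcobds : ∀ n : ℕ, AddSubgroup (X.Co n)
  | 0 => ⊥
  | (j + 1) => AddSubgroup.map (X.cb j) ((X.dCo j).ker)

/-- the `d`-cohomology `H^n_d` -/
abbrev Hd (n : ℕ) := X.dcocycles n ⧸ (X.dcobds n).addSubgroupOf (X.dcocycles n)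

/-- the `d`-cohomology class `[φ]_d` of a cocycle of `C*_d` -/
def clsd (n : ℕ) (φ : X.Co n) (h : φ ∈ X.dcocycles n) : X.Hd n :=
  QuotientAddGroup.mk ⟨φ, h⟩

/-- cocycles of the `s`-cochain complex `C*_s = ker s ⊆ C*` -/
def scocycles (n : ℕ) : AddSubgroup (X.Co n) := (X.sCo n).ker ⊓ (X.cb n).ker

/-- coboundaries of the `s`-cochain complex -/
def scobds : ∀ n : ℕ, AddSubgroup (X.Co n)
  | 0 => ⊥
  | (j + 1) => AddSubgroup.map (X.cb j) ((X.sCo j).ker)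

/-- the `s`-cohomology `H^n_s` -/
abbrev Hs (n : ℕ) := X.scocycles n ⧸ (X.scobds n).addSubgroupOf (X.scocycles n)

/-- the `s`-cohomology class `[φ]_s` of a cocycle of `C*_s` -/
def clss (n : ℕ) (φ : X.Co n) (h : φ ∈ X.scocycles n) : X.Hs n :=
  QuotientAddGroup.mk ⟨φ, h⟩

/-- the boundary of the `d`-chain complex `C^d = ker d ⊆ C`, i.e. the restriction
of the boundary of `C`. -/
def bdD (n : ℕ) : ↥((X.dCh (n + 1)).ker) →+ ↥((X.dCh n).ker) :=
  AddMonoidHom.codRestrict ((X.bd n).comp (X.dCh (n + 1)).ker.subtype) ((X.dCh n).ker)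
    (fun x => by
      have hx : X.dCh (n + 1) (x : X.Ch (n + 1)) = 0 := x.2
      simp only [AddMonoidHom.mem_ker, AddMonoidHom.coe_comp, AddSubgroup.coe_subtype,
        Function.comp_apply]
      rw [← bd_dCh, hx, map_zero])

/-- the boundary of the `s`-chain complex `C^s = ker s ⊆ C`, i.e. the restriction
of the boundary of `C`. -/
def bdS (n : ℕ) : ↥((X.sCh (n + 1)).ker) →+ ↥((X.sCh n).ker) :=
  AddMonoidHom.codRestrict ((X.bd n).comp (X.sCh (n + 1)).ker.subtype) ((X.sCh n).ker)
    (fun x => by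
      have hx : X.sCh (n + 1) (x : X.Ch (n + 1)) = 0 := x.2
      simp only [AddMonoidHom.mem_ker, AddMonoidHom.coe_comp, AddSubgroup.coe_subtype,
        Function.comp_apply]
      rw [← bd_sCh, hx, map_zero])

lemma cb_dCo (n : ℕ) (φ : X.Co n) :
    X.cb n (X.dCo n φ) = X.dCo (n + 1) (X.cb n φ) := by
  ext x
  show (X.dCo n φ) (X.bd n x) = (X.cb n φ) (X.dCh (n + 1) x)
  show φ (X.dCh n (X.bd n x)) = φ (X.bd n (X.dCh (n + 1) x))
  rw [bd_dCh]

lemma cb_sCo (n : ℕ) (φ : X.Co n) :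
    X.cb n (X.sCo n φ) = X.sCo (n + 1) (X.cb n φ) := by
  ext x
  show φ (X.sCh n (X.bd n x)) = φ (X.bd n (X.sCh (n + 1) x))
  rw [bd_sCh]

/-- the coboundary of `C*_d`, i.e. the restriction of the coboundary of `C*`. -/
def cbD (n : ℕ) : ↥((X.dCo n).ker) →+ ↥((X.dCo (n + 1)).ker) :=
  AddMonoidHom.codRestrict ((X.cb n).comp (X.dCo n).ker.subtype) ((X.dCo (n + 1)).ker)
    (fun φ => by
      have hφ : X.dCo n (φ : X.Co n) = 0 := φ.2
      simp only [AddMonoidHom.mem_ker, AddMonoidHom.coe_comp, AddSubgroup.coe_subtype,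
        Function.comp_apply]
      rw [← cb_dCo, hφ, map_zero])

end ZpFreeComplex

namespace ZpFreeComplex

variable {p : ℕ} (X : ZpFreeComplex p)

/-- cochains of the complex `Hom(C^s, ℤ)` -/
abbrev Co' (n : ℕ) := ↥((X.sCh n).ker) →+ ℤ

/-- the coboundary of `Hom(C^s, ℤ)`, dual to the restricted boundary of `C^s`. -/
def cb' (n : ℕ) : X.Co' n →+ X.Co' (n + 1) where
  toFun f := f.comp (X.bdS n)
  map_zero' := by ext x; simp
  map_add' _ _ := by ext x; simp

def cocycles' (n : ℕ) : AddSubgroup (X.Co' n) := (X.cb' n).ker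

def cobds' : ∀ n : ℕ, AddSubgroup (X.Co' n)
  | 0 => ⊥
  | (j + 1) => (X.cb' j).range

/-- the `n`-th cohomology of `Hom(C^s, ℤ)` -/
abbrev H' (n : ℕ) := X.cocycles' n ⧸ (X.cobds' n).addSubgroupOf (X.cocycles' n)

end ZpFreeComplex

/-!
Each `C_n` is free over `ℤ[ℤ/p]`, so `C --d--> C --s--> C --d--> C` is exact and explicitly
split: fibrewise prefix sums `h` satisfy `d h = id` on `ker s`, and `c - h (d c)` is constant
along fibres, i.e. lies in `im s`. Hence `ker d = im s`, so every cochain in `ker s` kills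
`ker d`. With a retraction `r : C → ker s`, put `γ_s(α) = α ∘ h` and `ρ_s(f) = d (f ∘ r)`.
Both are chain maps (`h` commutes with `∂` up to `ker d`), and they are mutually inverse
already on cochains, so they restrict to inverse isomorphisms of cocycles and of coboundaries.
-/

theorem ZMod.sum_range_natCast {M : Type*} [AddCommMonoid M] (p : ℕ) [NeZero p]
    (g : ZMod p → M) : ∑ k ∈ Finset.range p, g k = ∑ x, g x := by
  rw [← Fin.sum_univ_eq_sum_range (fun k => g k)]
  refine Fintype.sum_equiv (ZMod.finEquiv p).toEquiv _ _ fun i => ?_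
  obtain ⟨m, rfl⟩ := Nat.exists_eq_succ_of_ne_zero (NeZero.ne p)
  exact congrArg g (ZMod.natCast_zmod_val (n := m + 1) i)

namespace ZpFreeComplex

variable {p : ℕ} (X : ZpFreeComplex p)

lemma dCh_apply (n : ℕ) (c : X.Ch n) (z : X.F n × ZMod p) :
    X.dCh n c z = c z - c (z.1, z.2 - 1) := by
  simp [dCh, tCh]

lemma bd_mem_ker_sCh {n : ℕ} {c : X.Ch (n + 1)} (hc : c ∈ (X.sCh (n + 1)).ker) :
    X.bd n c ∈ (X.sCh n).ker :=
  (X.bdS n ⟨c, hc⟩).2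

def prefixSum (n : ℕ) : X.Ch n →+ X.Ch n where
  toFun c z := ∑ i ∈ Finset.range (z.2.val + 1), c (z.1, i)
  map_zero' := by funext z; simp
  map_add' a b := by funext z; simp [Finset.sum_add_distrib]

lemma prefixSum_apply (n : ℕ) (c : X.Ch n) (z : X.F n × ZMod p) :
    X.prefixSum n c z = ∑ i ∈ Finset.range (z.2.val + 1), c (z.1, i) := rfl

def gammaS (n : ℕ) : (X.sCo n).ker →+ X.Co' n where
  toFun α := ((α : X.Co n).comp (X.prefixSum n)).comp (X.sCh n).ker.subtype
  map_zero' := rfl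
  map_add' _ _ := rfl

lemma gammaS_apply (n : ℕ) (α : (X.sCo n).ker) (x : (X.sCh n).ker) :
    X.gammaS n α x = (α : X.Co n) (X.prefixSum n x) := rfl

variable [NeZero p]

lemma sCh_apply (n : ℕ) (c : X.Ch n) (z : X.F n × ZMod p) :
    X.sCh n c z = ∑ x, c (z.1, x) := by
  simp only [sCh, tCh, AddMonoidHom.finsetSum_apply, AddMonoidHom.coe_mk, ZeroHom.coe_mk,
    Finset.sum_apply]
  rw [ZMod.sum_range_natCast p (fun x => c (z.1, z.2 - x))]
  exact Fintype.sum_equiv (Equiv.subLeft z.2) _ _ fun _ => rfl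

lemma mem_ker_sCh {n : ℕ} {c : X.Ch n} : c ∈ (X.sCh n).ker ↔ ∀ σ, ∑ x, c (σ, x) = 0 := by
  simp only [AddMonoidHom.mem_ker, funext_iff, sCh_apply, Pi.zero_apply, Prod.forall]
  exact ⟨fun h σ => h σ 0, fun h σ _ => h σ⟩

lemma dCh_mem_ker_sCh (n : ℕ) (c : X.Ch n) : X.dCh n c ∈ (X.sCh n).ker := by
  simp only [mem_ker_sCh, dCh_apply, Finset.sum_sub_distrib, sub_eq_zero]
  exact fun σ => (Fintype.sum_equiv (Equiv.subRight 1) _ _ fun _ => rfl).symm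

lemma dCh_sCh (n : ℕ) (c : X.Ch n) : X.dCh n (X.sCh n c) = 0 := by
  funext z
  simp [dCh_apply, sCh_apply]

lemma const_mem_range_sCh (n : ℕ) (a : X.F n → ℤ) :
    (fun z => a z.1) ∈ (X.sCh n).range :=
  ⟨fun z => if z.2 = 0 then a z.1 else 0, funext fun z => by simp [sCh_apply]⟩

lemma dCh_prefixSum {n : ℕ} {b : X.Ch n} (hb : b ∈ (X.sCh n).ker) :
    X.dCh n (X.prefixSum n b) = b := by
  funext ⟨σ, j⟩
  rw [dCh_apply, prefixSum_apply, prefixSum_apply]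
  obtain ⟨k, hk, rfl⟩ : ∃ k < p, j = (k : ZMod p) :=
    ⟨j.val, j.val_lt, (ZMod.natCast_zmod_val j).symm⟩
  rcases k with _ | m
  · -- the prefix sum ending at `-1` runs over the whole fibre, where `b` sums to zero
    obtain ⟨q, rfl⟩ := Nat.exists_eq_succ_of_ne_zero (NeZero.ne p)
    rw [Nat.cast_zero, zero_sub, ZMod.val_neg_one, ZMod.sum_range_natCast _ fun x => b (σ, x),
      X.mem_ker_sCh.1 hb σ]
    simp
  · have hm : ((m + 1 : ℕ) : ZMod p) - 1 = (m : ZMod p) := by push_cast; ring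
    rw [hm, ZMod.val_cast_of_lt hk, ZMod.val_cast_of_lt (by omega), Finset.sum_range_succ]
    ring

lemma sub_prefixSum_dCh_apply (n : ℕ) (c : X.Ch n) (z : X.F n × ZMod p) :
    c z - X.prefixSum n (X.dCh n c) z = c (z.1, -1) := by
  have hterm (i : ℕ) : X.dCh n c (z.1, i) = c (z.1, ((i + 1 : ℕ) : ZMod p) - 1) -
      c (z.1, (i : ZMod p) - 1) := by
    rw [dCh_apply]; push_cast; ring_nf
  rw [prefixSum_apply, Finset.sum_congr rfl fun i _ => hterm i,
    Finset.sum_range_sub (fun i => c (z.1, (i : ZMod p) - 1))]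
  push_cast
  rw [ZMod.natCast_zmod_val, add_sub_cancel_right, zero_sub]
  ring

lemma mem_range_sCh_of_dCh_eq_zero {n : ℕ} {u : X.Ch n} (hu : X.dCh n u = 0) :
    u ∈ (X.sCh n).range := by
  have hconst : u = fun z => u (z.1, -1) := funext fun z => by
    simpa [hu] using X.sub_prefixSum_dCh_apply n u z
  rw [hconst]
  exact X.const_mem_range_sCh n fun σ => u (σ, -1)

def toKerS (n : ℕ) : X.Ch n →+ (X.sCh n).ker :=
  AddMonoidHom.codRestrict (M := X.Ch n)
    { toFun c z := c z - if z.2 = 0 then ∑ x, c (z.1, x) else 0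
      map_zero' := by funext z; simp
      map_add' a b := by
        funext z
        simp only [Pi.add_apply, Finset.sum_add_distrib]
        split_ifs <;> ring }
    _ fun c => by
      refine X.mem_ker_sCh.2 fun σ => ?_
      simp [Finset.sum_sub_distrib]

lemma toKerS_of_mem {n : ℕ} {c : X.Ch n} (hc : c ∈ (X.sCh n).ker) :
    X.toKerS n c = ⟨c, hc⟩ :=
  Subtype.ext <| funext fun z => by simp [toKerS, X.mem_ker_sCh.1 hc z.1]

def extendCo (n : ℕ) (f : X.Co' n) : X.Co n := f.comp (X.toKerS n)

lemma extendCo_apply_of_mem {n : ℕ} (f : X.Co' n) {c : X.Ch n} (hc : c ∈ (X.sCh n).ker) :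
    X.extendCo n f c = f ⟨c, hc⟩ := by
  rw [extendCo, AddMonoidHom.comp_apply, toKerS_of_mem]

lemma apply_eq_zero_of_dCh_eq_zero {n : ℕ} {α : X.Co n} (hα : α ∈ (X.sCo n).ker)
    {u : X.Ch n} (hu : X.dCh n u = 0) : α u = 0 := by
  obtain ⟨e, rfl⟩ := X.mem_range_sCh_of_dCh_eq_zero hu
  exact DFunLike.congr_fun (AddMonoidHom.mem_ker.1 hα) e

lemma apply_prefixSum_dCh {n : ℕ} {α : X.Co n} (hα : α ∈ (X.sCo n).ker) (c : X.Ch n) :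
    α (X.prefixSum n (X.dCh n c)) = α c := by
  have hker : X.dCh n (c - X.prefixSum n (X.dCh n c)) = 0 := by
    funext z
    simp only [dCh_apply, Pi.sub_apply, sub_prefixSum_dCh_apply, sub_self, Pi.zero_apply]
  have hzero := X.apply_eq_zero_of_dCh_eq_zero hα hker
  rwa [map_sub, sub_eq_zero, eq_comm] at hzero

lemma dCo_mem_ker_sCo (n : ℕ) (ψ : X.Co n) : X.dCo n ψ ∈ (X.sCo n).ker :=
  AddMonoidHom.mem_ker.2 <| AddMonoidHom.ext fun c => by
    change ψ (X.dCh n (X.sCh n c)) = 0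
    rw [dCh_sCh, map_zero]

lemma dCo_eq_of_eqOn_ker {n : ℕ} {φ ψ : X.Co n}
    (h : ∀ x : (X.sCh n).ker, φ x = ψ x) : X.dCo n φ = X.dCo n ψ :=
  AddMonoidHom.ext fun c => h ⟨X.dCh n c, X.dCh_mem_ker_sCh n c⟩

def rhoS (n : ℕ) : X.Co' n →+ (X.sCo n).ker :=
  AddMonoidHom.codRestrict ((X.dCo n).comp (AddMonoidHom.compHom' (X.toKerS n)))
    _ fun _ => X.dCo_mem_ker_sCo n _

lemma coe_rhoS (n : ℕ) (f : X.Co' n) : (X.rhoS n f : X.Co n) = X.dCo n (X.extendCo n f) := rfl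

lemma gammaS_dCo {n : ℕ} (ψ : X.Co n) (hψ : X.dCo n ψ ∈ (X.sCo n).ker) (x : (X.sCh n).ker) :
    X.gammaS n ⟨X.dCo n ψ, hψ⟩ x = ψ x :=
  congrArg ψ (X.dCh_prefixSum x.2)

lemma rhoS_eq_dCo {n : ℕ} {ψ : X.Co n} {f : X.Co' n} (hf : ∀ x : (X.sCh n).ker, f x = ψ x) :
    (X.rhoS n f : X.Co n) = X.dCo n ψ :=
  X.dCo_eq_of_eqOn_ker fun x => (X.extendCo_apply_of_mem f x.2).trans (hf x)

lemma gammaS_rhoS (n : ℕ) (f : X.Co' n) : X.gammaS n (X.rhoS n f) = f := by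
  ext x
  change X.extendCo n f (X.dCh n (X.prefixSum n x)) = f x
  rw [X.dCh_prefixSum x.2, extendCo_apply_of_mem]

lemma rhoS_gammaS (n : ℕ) (α : (X.sCo n).ker) : X.rhoS n (X.gammaS n α) = α := by
  refine Subtype.ext <| AddMonoidHom.ext fun c => ?_
  change X.gammaS n α (X.toKerS n (X.dCh n c)) = (α : X.Co n) c
  rw [toKerS_of_mem _ (X.dCh_mem_ker_sCh n c), gammaS_apply, X.apply_prefixSum_dCh α.2]

lemma gammaS_comp_bdS (n : ℕ) (α : (X.sCo n).ker) (β : (X.sCo (n + 1)).ker)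
    (hβ : (β : X.Co (n + 1)) = X.cb n α) :
    X.gammaS (n + 1) β = (X.gammaS n α).comp (X.bdS n) := by
  ext x
  have hbd : X.bd n x ∈ (X.sCh n).ker := X.bd_mem_ker_sCh x.2
  -- `h` commutes with `∂` up to an element of `ker d`, which `α` kills
  have hker : X.dCh n (X.bd n (X.prefixSum (n + 1) x) - X.prefixSum n (X.bd n x)) = 0 := by
    rw [map_sub, ← bd_dCh, X.dCh_prefixSum x.2, X.dCh_prefixSum hbd, sub_self]
  rw [AddMonoidHom.comp_apply, gammaS_apply, gammaS_apply, hβ, ← sub_eq_zero]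
  exact (map_sub _ _ _).symm.trans (X.apply_eq_zero_of_dCh_eq_zero α.2 hker)

lemma rhoS_cb' (n : ℕ) (f : X.Co' n) :
    (X.rhoS (n + 1) (X.cb' n f) : X.Co (n + 1)) = X.cb n (X.rhoS n f) := by
  rw [coe_rhoS, coe_rhoS, cb_dCo]
  refine X.dCo_eq_of_eqOn_ker fun x => ?_
  change X.cb' n f (X.toKerS (n + 1) x) = X.extendCo n f (X.bd n x)
  rw [toKerS_of_mem _ x.2, X.extendCo_apply_of_mem f (X.bd_mem_ker_sCh x.2)]
  rfl

lemma gammaS_mem_cocycles' {n : ℕ} (α : (X.sCo n).ker) (hα : X.cb n α = 0) :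
    X.gammaS n α ∈ X.cocycles' n := by
  have hcb : X.cb n α ∈ (X.sCo (n + 1)).ker := by
    rw [AddMonoidHom.mem_ker, ← cb_sCo, AddMonoidHom.mem_ker.1 α.2, map_zero]
  change (X.gammaS n α).comp (X.bdS n) = 0
  rw [← X.gammaS_comp_bdS n α ⟨_, hcb⟩ rfl, show (⟨_, hcb⟩ : (X.sCo (n + 1)).ker) = 0 from
    Subtype.ext hα, map_zero]

lemma rhoS_mem_scocycles {n : ℕ} {f : X.Co' n} (hf : f ∈ X.cocycles' n) :
    (X.rhoS n f : X.Co n) ∈ X.scocycles n :=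
  ⟨(X.rhoS n f).2, AddMonoidHom.mem_ker.2 <| by
    rw [← rhoS_cb', AddMonoidHom.mem_ker.1 hf, map_zero]; rfl⟩

lemma gammaS_mem_cobds' {n : ℕ} (α : (X.sCo n).ker) (hα : (α : X.Co n) ∈ X.scobds n) :
    X.gammaS n α ∈ X.cobds' n := by
  cases n with
  | zero =>
    rw [show α = 0 from Subtype.ext hα, map_zero]
    exact zero_mem _
  | succ j =>
    obtain ⟨φ, hφ, hcb⟩ := hα
    exact ⟨X.gammaS j ⟨φ, hφ⟩, (X.gammaS_comp_bdS j ⟨φ, hφ⟩ α hcb.symm).symm⟩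

lemma rhoS_mem_scobds {n : ℕ} {f : X.Co' n} (hf : f ∈ X.cobds' n) :
    (X.rhoS n f : X.Co n) ∈ X.scobds n := by
  cases n with
  | zero =>
    rw [show f = 0 from hf, map_zero]
    exact zero_mem _
  | succ j =>
    obtain ⟨g, rfl⟩ := hf
    exact ⟨X.rhoS j g, (X.rhoS j g).2, (X.rhoS_cb' j g).symm⟩

def cocyclesEquiv (n : ℕ) : X.scocycles n ≃+ X.cocycles' n :=
  AddMonoidHom.toAddEquiv
    (AddMonoidHom.codRestrict
      ((X.gammaS n).comp (AddSubgroup.inclusion inf_le_left)) _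
      fun α => X.gammaS_mem_cocycles' _ α.2.2)
    (AddMonoidHom.codRestrict
      ((X.sCo n).ker.subtype.comp ((X.rhoS n).comp (X.cocycles' n).subtype)) _
      fun f => X.rhoS_mem_scocycles f.2)
    (AddMonoidHom.ext fun α => Subtype.ext (Subtype.ext_iff.1 (X.rhoS_gammaS n ⟨α, α.2.1⟩) :))
    (AddMonoidHom.ext fun f => Subtype.ext (X.gammaS_rhoS n f))

lemma map_cocyclesEquiv_cobds (n : ℕ) :
    ((X.scobds n).addSubgroupOf (X.scocycles n)).map
        (X.cocyclesEquiv n : X.scocycles n →+ X.cocycles' n) =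
      (X.cobds' n).addSubgroupOf (X.cocycles' n) := by
  refine le_antisymm (AddSubgroup.map_le_iff_le_comap.2 fun α hα => ?_) fun f hf => ?_
  · exact X.gammaS_mem_cobds' (n := n) ⟨α, α.2.1⟩ (AddSubgroup.mem_addSubgroupOf.1 hα :)
  · rw [AddSubgroup.map_equiv_eq_comap_symm]
    exact AddSubgroup.mem_addSubgroupOf.2 (X.rhoS_mem_scobds (AddSubgroup.mem_addSubgroupOf.1 hf))

def cohomologyEquiv (n : ℕ) : X.Hs n ≃+ X.H' n :=
  QuotientAddGroup.congr _ _ (X.cocyclesEquiv n) (X.map_cocyclesEquiv_cobds n)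

end ZpFreeComplex

open ZpFreeComplex

theorem gamma_s_rho_s_induce_inverse_isomorphisms
    (p : ℕ) (hp : p.Prime) (X : ZpFreeComplex p) :
    (∀ n (f : X.Co' n), ∃ ψ : X.Co n, ∀ x : ↥((X.sCh n).ker), f x = ψ (x : X.Ch n))
    ∧ ∃ (γ : ∀ n, ↥((X.sCo n).ker) →+ X.Co' n)
        (ρ : ∀ n, X.Co' n →+ ↥((X.sCo n).ker))
        (Γ : ∀ n, X.Hs n ≃+ X.H' n),
        -- (ii) γ_s is given by γ_s(dψ) = ψ|_{C^s} ...
        (∀ n (ψ : X.Co n) (hψ : X.dCo n ψ ∈ (X.sCo n).ker) (x : ↥((X.sCh n).ker)),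
            γ n ⟨X.dCo n ψ, hψ⟩ x = ψ (x : X.Ch n))
        -- ... and is a chain homomorphism:
        ∧ (∀ n (α : ↥((X.sCo n).ker)) (β : ↥((X.sCo (n + 1)).ker)),
            (β : X.Co (n + 1)) = X.cb n (α : X.Co n) →
            γ (n + 1) β = (γ n α).comp (X.bdS n))
        -- (iii) ρ_s is given by ρ_s(ψ|_{C^s}) = dψ ...
        ∧ (∀ n (ψ : X.Co n) (f : X.Co' n),
            (∀ x : ↥((X.sCh n).ker), f x = ψ (x : X.Ch n)) →
            ((ρ n f : X.Co n) = X.dCo n ψ))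
        -- ... and is a chain homomorphism:
        ∧ (∀ n (f : X.Co' n),
            ((ρ (n + 1) (X.cb' n f) : X.Co (n + 1)) = X.cb n (ρ n f : X.Co n)))
        -- (iv) γ_s and ρ_s induce mutually inverse isomorphisms on cohomology:
        ∧ (∀ n (α : ↥(X.scocycles n)) (hα : (α : X.Co n) ∈ (X.sCo n).ker)
             (g : ↥(X.cocycles' n)),
            (g : X.Co' n) = γ n ⟨(α : X.Co n), hα⟩ →
            Γ n (QuotientAddGroup.mk α) = QuotientAddGroup.mk g)
        ∧ (∀ n (g : ↥(X.cocycles' n)) (α : ↥(X.scocycles n)),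
            (α : X.Co n) = (ρ n (g : X.Co' n) : X.Co n) →
            (Γ n).symm (QuotientAddGroup.mk g) = QuotientAddGroup.mk α) := by
  have : NeZero p := ⟨hp.ne_zero⟩
  refine ⟨fun n f => ⟨X.extendCo n f, fun x => (X.extendCo_apply_of_mem f x.2).symm⟩,
    X.gammaS, X.rhoS, X.cohomologyEquiv, fun _ => X.gammaS_dCo,
    X.gammaS_comp_bdS, fun _ _ _ => X.rhoS_eq_dCo, X.rhoS_cb',
    fun _ _ _ _ hg => congrArg QuotientAddGroup.mk (Subtype.ext hg.symm),
    fun _ _ _ hα => congrArg QuotientAddGroup.mk (Subtype.ext hα.symm)⟩
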